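/- Let G be a consistent perfect-information stochastic game with finitely many vertices and a tail winning condition W. For every initial vertex v_0, all strategies σ, τ, and any random variable N with values in ℕ ∪ {∞} that is a stopping time with respect to the filtration generated by (V_n)_{n∈ℕ} (in particular the deviation date reset_σ), one has E^{σ,τ}_{v_0}[val(V_N)·1_{N < ∞}] ≤ val(v_0). -/

import Mathlib

/-!
Under `P^{σ,τ}_{v₀}` the value process `val(V_n)` is a supermartingale for the filtration of
histories. At a Max or min vertex the next vertex is reached along an edge, which keeps the value
by consistency. At a random vertex `u`, Max can answer each random move `u → x` with an
`ε`-optimal strategy from `x`; since `W` is tail, the game continued after that move is the game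
started at `x`, so `val(u) ≥ ∑ₓ p(u,x) val(x) - ε`. Optional stopping at the bounded times
`min N n` bounds `E[val(V_{min N n})]` by `val(v₀)`, and Fatou's lemma lets `n → ∞`
(the values are nonnegative, so the plays with `N = ∞` only help).
-/

open MeasureTheory ProbabilityTheory Filter Topology

attribute [local instance] Classical.propDecidable

namespace StochasticGames

/-- A perfect-information stochastic game arena: a partition of the finite vertex set into
Max vertices, min vertices and random vertices, an edge relation such that every vertex has
an outgoing edge, and transition probabilities at random vertices, positive exactly on edges. -/
structure Game (V : Type) [Fintype V] where
  VMax : Set V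
  Vmin : Set V
  VR : Set V
  E : V → V → Prop
  p : V → V → ℝ
  cover : ∀ v, v ∈ VMax ∨ v ∈ Vmin ∨ v ∈ VR
  disjMm : Disjoint VMax Vmin
  disjMR : Disjoint VMax VR
  disjmR : Disjoint Vmin VR
  succ_exists : ∀ v, ∃ w, E v w
  p_nonneg : ∀ v ∈ VR, ∀ w, 0 ≤ p v w
  p_sum : ∀ v ∈ VR, ∑ w, p v w = 1
  p_pos_iff : ∀ v ∈ VR, ∀ w, (0 < p v w ↔ E v w)

variable {V : Type} [Fintype V] [MeasurableSpace V] [DiscreteMeasurableSpace V]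

/-- The cylinder of plays starting with the finite word `h`. -/
def cyl (h : List V) : Set (ℕ → V) :=
  {ω | ∀ i : Fin h.length, ω i = h.get i}

/-- Prepend a finite word to an infinite word. -/
def prepend (h : List V) (q : ℕ → V) : ℕ → V :=
  fun n => if hn : n < h.length then h.get ⟨n, hn⟩ else q (n - h.length)

/-- A winning condition is tail if it is invariant under adding/removing finite prefixes. -/
def IsTail (W : Set (ℕ → V)) : Prop :=
  ∀ (h : List V) (q : ℕ → V), q ∈ W ↔ prepend h q ∈ W

/-- A finite play: a nonempty word whose consecutive vertices are linked by edges. -/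
def Game.FinitePlay (G : Game V) (h : List V) : Prop :=
  h ≠ [] ∧ h.Chain' G.E

/-- A strategy for player Max: after any finite play ending in a Max vertex,
it chooses a successor along an edge. -/
def Game.IsMaxStrategy (G : Game V) (σ : List V → V) : Prop :=
  ∀ h : List V, G.FinitePlay h → ∀ v, h.getLast? = some v → v ∈ G.VMax → G.E v (σ h)

/-- A strategy for player min. -/
def Game.IsMinStrategy (G : Game V) (τ : List V → V) : Prop :=
  ∀ h : List V, G.FinitePlay h → ∀ v, h.getLast? = some v → v ∈ G.Vmin → G.E v (τ h)

/-- `μ` is the probability measure on plays induced by the initial vertex `v` and the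
strategies `σ` (for Max) and `τ` (for min): the play starts at `v` almost surely and,
conditionally on any finite prefix of positive probability, the next vertex is chosen by
`σ`, by `τ`, or according to `G.p`, depending on the owner of the current vertex. -/
def Game.IsInduced (G : Game V) (σ τ : List V → V) (v : V) (μ : Measure (ℕ → V)) : Prop :=
  IsProbabilityMeasure μ ∧
  μ {ω | ω 0 = v} = 1 ∧
  ∀ (h : List V) (u : V), h.getLast? = some u → μ (cyl h) ≠ 0 →
    (u ∈ G.VMax → ProbabilityTheory.cond μ (cyl h) {ω | ω h.length = σ h} = 1) ∧
    (u ∈ G.Vmin → ProbabilityTheory.cond μ (cyl h) {ω | ω h.length = τ h} = 1) ∧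
    (u ∈ G.VR → ∀ w, ProbabilityTheory.cond μ (cyl h) {ω | ω h.length = w} =
      ENNReal.ofReal (G.p u w))

/-- A family of measures indexed by a pair of strategies and an initial vertex. -/
abbrev StratFam (V : Type) [MeasurableSpace V] :=
  (List V → V) → (List V → V) → V → Measure (ℕ → V)

/-- `P` assigns to every pair of strategies and every initial vertex the induced
probability measure on plays. -/
def Game.IsInducedFam (G : Game V) (P : StratFam V) : Prop :=
  ∀ σ τ v, G.IsInduced σ τ v (P σ τ v)

/-- The value of a vertex: `val(v) = sup_σ inf_τ P^{σ,τ}_v(W)`. -/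
noncomputable def Game.val (G : Game V) (W : Set (ℕ → V)) (P : StratFam V) (v : V) : ℝ :=
  ⨆ σ : {σ // G.IsMaxStrategy σ}, ⨅ τ : {τ // G.IsMinStrategy τ}, (P σ.1 τ.1 v W).toReal

/-- An optimal strategy for Max: it guarantees winning with probability `val(v)` from
every vertex `v`. -/
def Game.OptimalMax (G : Game V) (W : Set (ℕ → V)) (P : StratFam V) (σ : List V → V) : Prop :=
  G.IsMaxStrategy σ ∧
  ∀ v, (⨅ τ : {τ // G.IsMinStrategy τ}, (P σ τ.1 v W).toReal) = G.val W P v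

/-- An optimal strategy for min. -/
def Game.OptimalMin (G : Game V) (W : Set (ℕ → V)) (P : StratFam V) (τ : List V → V) : Prop :=
  G.IsMinStrategy τ ∧
  ∀ v, (⨆ σ : {σ // G.IsMaxStrategy σ}, (P σ.1 τ v W).toReal) = G.val W P v

/-- An `ε`-optimal strategy for Max. -/
def Game.EpsOptimalMax (G : Game V) (W : Set (ℕ → V)) (P : StratFam V) (ε : ℝ)
    (σ : List V → V) : Prop :=
  G.IsMaxStrategy σ ∧
  ∀ v, G.val W P v - ε ≤ ⨅ τ : {τ // G.IsMinStrategy τ}, (P σ τ.1 v W).toReal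

/-- A game is consistent if no edge out of a Max or min vertex changes the value. -/
def Game.Consistent (G : Game V) (W : Set (ℕ → V)) (P : StratFam V) : Prop :=
  ∀ v w, G.E v w → (v ∈ G.VMax ∨ v ∈ G.Vmin) → G.val W P v = G.val W P w

/-- The quality of the strategy `σ` after a finite play `v₀ v₁ ⋯ vₙ`:
`inf_τ P^{σ,τ}_{v₀}(W ∣ V₀ = v₀, …, Vₙ = vₙ)`. -/
noncomputable def Game.qual (G : Game V) (W : Set (ℕ → V)) (P : StratFam V)
    (σ : List V → V) : List V → ℝ
  | [] => 0
  | v :: l => ⨅ τ : {τ // G.IsMinStrategy τ},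
      (ProbabilityTheory.cond (P σ τ.1 v) (cyl (v :: l)) W).toReal

/-- The finite play `ω 0, ω 1, …, ω n`. -/
def prefixList (ω : ℕ → V) (n : ℕ) : List V := List.ofFn (fun i : Fin (n + 1) => ω i)

/-- The deviation date: the first time the quality of `σ` drops at least `m/2` below the
value of the current vertex (`∞` if this never happens). -/
noncomputable def Game.resetTime (G : Game V) (W : Set (ℕ → V)) (P : StratFam V)
    (σ : List V → V) (m : ℝ) (ω : ℕ → V) : ℕ∞ :=
  sInf ((fun n : ℕ => (n : ℕ∞)) ''
    {n | G.qual W P σ (prefixList ω n) ≤ G.val W P (ω n) - m / 2})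

/-- The date `t(v₀,…,vₙ)` of the latest deviation before date `n`, along the play `ω`. -/
noncomputable def Game.lastDevAux (G : Game V) (W : Set (ℕ → V)) (P : StratFam V)
    (σ : List V → V) (m : ℝ) (ω : ℕ → V) : ℕ → ℕ
  | 0 => 0
  | n + 1 =>
    let t := G.lastDevAux W P σ m ω n
    if G.val W P (ω (n + 1)) - m / 2 ≤ G.qual W P σ ((prefixList ω (n + 1)).drop t)
    then t else n + 1

/-- The date of the latest deviation, as a function of the finite play `h`. -/
noncomputable def Game.lastDev [Inhabited V] (G : Game V) (W : Set (ℕ → V)) (P : StratFam V)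
    (σ : List V → V) (m : ℝ) (h : List V) : ℕ :=
  G.lastDevAux W P σ m (fun i => h.getD i default) (h.length - 1)

/-- The reset strategy `σ'`: forget everything before the latest deviation and apply `σ`. -/
noncomputable def Game.resetStrat [Inhabited V] (G : Game V) (W : Set (ℕ → V))
    (P : StratFam V) (σ : List V → V) (m : ℝ) : List V → V :=
  fun h => σ (h.drop (G.lastDev W P σ m h))

/-- The σ-algebra generated by the coordinates `V₀, …, Vₙ`. -/
def hist (V : Type) [MeasurableSpace V] (n : ℕ) : MeasurableSpace (ℕ → V) :=
  MeasurableSpace.comap (fun ω (i : Fin (n + 1)) => ω i) inferInstance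

/-- The strategy `σ[h]` shifted by the finite play `h`:
`σ[h](w₀w₁⋯wₖ) = σ(v₀⋯vₙw₁⋯wₖ)` where `h = v₀⋯vₙ`. -/
def shiftStrat (s : List V → V) (h : List V) : List V → V := fun l => s (h ++ l.drop 1)

/-- The function `φ[h]` shifted by the finite play `h`:
`φ[h](w₀w₁w₂⋯) = φ(v₀⋯vₙw₁w₂⋯)` where `h = v₀⋯vₙ`. -/
def shiftFun {α : Type} (φ : (ℕ → V) → α) (h : List V) : (ℕ → V) → α :=
  fun q => φ (prepend h (fun n => q (n + 1)))

/-- A superfluous edge: a move of Max decreasing the value, or a move of min increasing it. -/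
def Game.Superfluous (G : Game V) (W : Set (ℕ → V)) (P : StratFam V) (v w : V) : Prop :=
  (v ∈ G.VMax ∧ G.val W P w < G.val W P v) ∨ (v ∈ G.Vmin ∧ G.val W P v < G.val W P w)

end StochasticGames

lemma ProbabilityTheory.cond_map_apply {Ω Ω' : Type*} [MeasurableSpace Ω] [MeasurableSpace Ω']
    {ρ : Measure Ω} {f : Ω → Ω'} (hf : Measurable f) {s t : Set Ω'} (hs : MeasurableSet s)
    (ht : MeasurableSet t) : (ρ.map f)[t | s] = ρ[f ⁻¹' t | f ⁻¹' s] := by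
  rw [cond_apply hs, cond_apply (hf hs), Measure.map_apply hf hs,
    Measure.map_apply hf (hs.inter ht), Set.preimage_inter]

namespace MeasureTheory

variable {Ω : Type*} {m0 : MeasurableSpace Ω} {μ : Measure Ω} [IsFiniteMeasure μ]
  {𝒢 : Filtration ℕ m0} {f : ℕ → Ω → ℝ} {τ : Ω → WithTop ℕ}

lemma Supermartingale.integral_indicator_stoppedValue_le (hf : Supermartingale f 𝒢 μ)
    (hf0 : 0 ≤ f) (hτ : IsStoppingTime 𝒢 τ) :
    ∫ ω, {ω | τ ω ≠ ⊤}.indicator (stoppedValue f τ) ω ∂μ ≤ ∫ ω, f 0 ω ∂μ := by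
  set F := {ω | τ ω ≠ ⊤}.indicator (stoppedValue f τ)
  have hF0 : 0 ≤ F := Set.indicator_nonneg fun ω _ => hf0 _ ω
  have hstop : Supermartingale (stoppedProcess f τ) 𝒢 μ := by
    simpa only [stoppedProcess_neg, neg_neg] using (hf.neg.stoppedProcess hτ).neg
  have hstop0 : stoppedProcess f τ 0 = f 0 := funext fun ω => stoppedProcess_eq_of_le (by simp)
  have hbound (n : ℕ) : ∫ ω, stoppedProcess f τ n ω ∂μ ≤ ∫ ω, f 0 ω ∂μ := by
    simpa only [Measure.restrict_univ, hstop0] using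
      hstop.setIntegral_le (Nat.zero_le n) MeasurableSet.univ
  have hlim (ω : Ω) :
      ENNReal.ofReal (F ω) ≤ liminf (fun n => ENNReal.ofReal (stoppedProcess f τ n ω)) atTop := by
    rcases eq_or_ne (τ ω) ⊤ with hτω | hτω
    · simp [F, hτω]
    obtain ⟨k, hk⟩ := WithTop.ne_top_iff_exists.1 hτω
    have hev : ∀ᶠ n in atTop, ENNReal.ofReal (stoppedProcess f τ n ω) = ENNReal.ofReal (F ω) :=
      eventually_atTop.2 ⟨k, fun n hn => by
        rw [stoppedProcess_eq_of_ge (hk ▸ WithTop.coe_le_coe.2 hn)]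
        simp [F, hτω, stoppedValue]⟩
    rw [liminf_congr hev, liminf_const]
  have hlint : ∫⁻ ω, ENNReal.ofReal (F ω) ∂μ ≤ ENNReal.ofReal (∫ ω, f 0 ω ∂μ) :=
    calc ∫⁻ ω, ENNReal.ofReal (F ω) ∂μ
        ≤ ∫⁻ ω, liminf (fun n => ENNReal.ofReal (stoppedProcess f τ n ω)) atTop ∂μ :=
          lintegral_mono hlim
      _ ≤ liminf (fun n => ∫⁻ ω, ENNReal.ofReal (stoppedProcess f τ n ω) ∂μ) atTop :=
          lintegral_liminf_le' fun n => (hstop.integrable n).aemeasurable.ennreal_ofReal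
      _ ≤ liminf (fun _ => ENNReal.ofReal (∫ ω, f 0 ω ∂μ)) atTop := by
          refine liminf_le_liminf (.of_forall fun n => ?_)
          rw [← ofReal_integral_eq_lintegral_ofReal (hstop.integrable n)
            (.of_forall fun ω => hf0 _ ω)]
          exact ENNReal.ofReal_le_ofReal (hbound n)
      _ = ENNReal.ofReal (∫ ω, f 0 ω ∂μ) := liminf_const _
  have hC0 : 0 ≤ ∫ ω, f 0 ω ∂μ := integral_nonneg (hf0 0)
  by_cases hF : Integrable F μ
  · rw [integral_eq_lintegral_of_nonneg_ae (.of_forall hF0) hF.aestronglyMeasurable]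
    exact ENNReal.toReal_le_of_le_ofReal hC0 hlint
  · rw [integral_undef hF]
    exact hC0

end MeasureTheory

namespace StochasticGames

section Cylinders

variable {V : Type}

def dropFirst (ω : ℕ → V) : ℕ → V := fun n => ω (n + 1)

lemma cyl_nil : cyl ([] : List V) = Set.univ := by
  simp [cyl]

lemma cyl_singleton (v : V) : cyl [v] = {ω : ℕ → V | ω 0 = v} := by
  ext ω
  simp [cyl]

lemma cyl_append (h : List V) (x : V) :
    cyl (h ++ [x]) = cyl h ∩ {ω : ℕ → V | ω h.length = x} := by
  ext ω
  constructor
  · intro hω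
    refine ⟨fun i => ?_, by simpa using hω ⟨h.length, by simp⟩⟩
    simpa [List.getElem_append_left i.isLt] using hω ⟨i, by simp⟩
  · rintro ⟨hh, hx⟩ ⟨i, hi⟩
    rcases lt_or_ge i h.length with hi' | hi'
    · simpa [List.getElem_append_left hi'] using hh ⟨i, hi'⟩
    · obtain rfl : i = h.length := by simp at hi; omega
      simpa using hx

lemma cyl_append_subset (h : List V) (x : V) : cyl (h ++ [x]) ⊆ cyl h :=
  cyl_append h x ▸ Set.inter_subset_left

lemma mem_cyl_cons {ω : ℕ → V} {u : V} {l : List V} :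
    ω ∈ cyl (u :: l) ↔ ω 0 = u ∧ dropFirst ω ∈ cyl l := by
  simp [cyl, dropFirst, Fin.forall_fin_succ]

lemma cyl_pair_inter_preimage_dropFirst (u x : V) (l : List V) :
    cyl [u, x] ∩ dropFirst ⁻¹' cyl (x :: l) = cyl (u :: x :: l) := by
  ext ω
  simp only [Set.mem_inter_iff, Set.mem_preimage, mem_cyl_cons, cyl_nil, Set.mem_univ, and_true]
  tauto

lemma IsTail.preimage_dropFirst {W : Set (ℕ → V)} (hW : IsTail W) : dropFirst ⁻¹' W = W := by
  ext ω
  have hω : prepend [ω 0] (dropFirst ω) = ω := by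
    funext n
    cases n <;> simp [prepend, dropFirst]
  exact (hW [ω 0] (dropFirst ω)).trans (by rw [hω])

lemma mem_cyl_ofFn {n : ℕ} {b : Fin n → V} {ω : ℕ → V} :
    ω ∈ cyl (List.ofFn b) ↔ (fun i : Fin n => ω i) = b := by
  simp [cyl, funext_iff, Fin.forall_iff]

lemma isPiSystem_cyl : IsPiSystem (Set.range (cyl (V := V))) := by
  have nested : ∀ h h' : List V, h.length ≤ h'.length → (cyl h ∩ cyl h').Nonempty →
      cyl h' ⊆ cyl h := by
    rintro h h' hle ⟨ω₀, hω₀, hω₀'⟩ ω hω i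
    have hi : (i : ℕ) < h'.length := i.isLt.trans_le hle
    rw [hω ⟨i, hi⟩, ← hω₀' ⟨i, hi⟩]
    exact hω₀ i
  rintro _ ⟨h, rfl⟩ _ ⟨h', rfl⟩ hne
  rcases le_total h.length h'.length with hle | hle
  · exact ⟨h', (Set.inter_eq_right.2 (nested h h' hle hne)).symm⟩
  · exact ⟨h, (Set.inter_eq_left.2 (nested h' h hle (Set.inter_comm _ _ ▸ hne))).symm⟩

end Cylinders

section Measurability

variable {V : Type} [MeasurableSpace V] [DiscreteMeasurableSpace V]

lemma measurableSet_apply_eq (k : ℕ) (x : V) : MeasurableSet {ω : ℕ → V | ω k = x} :=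
  (measurableSet_singleton x).preimage (measurable_pi_apply k)

lemma measurableSet_cyl (h : List V) : MeasurableSet (cyl h) := by
  simp only [cyl, Set.ofPred_forall]
  exact .iInter fun i => measurableSet_apply_eq _ _

lemma generateFrom_cyl [Countable V] :
    MeasurableSpace.generateFrom (Set.range (cyl (V := V))) = MeasurableSpace.pi := by
  refine le_antisymm (MeasurableSpace.generateFrom_le ?_) ?_
  · rintro _ ⟨h, rfl⟩
    exact measurableSet_cyl h
  · refine iSup_le fun n => MeasurableSpace.comap_le_iff_le_map.2 fun s _ => ?_
    have hfiber : (fun ω : ℕ → V => ω n) ⁻¹' s =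
        ⋃ (b : Fin (n + 1) → V) (_ : b (Fin.last n) ∈ s), cyl (List.ofFn b) := by
      ext ω
      simp only [Set.mem_preimage, Set.mem_iUnion, mem_cyl_ofFn, exists_prop]
      exact ⟨fun hω => ⟨_, hω, rfl⟩, by rintro ⟨b, hb, rfl⟩; exact hb⟩
    show MeasurableSet[MeasurableSpace.generateFrom (Set.range cyl)]
      ((fun ω : ℕ → V => ω n) ⁻¹' s)
    rw [hfiber]
    exact .iUnion fun b => .iUnion fun _ => MeasurableSpace.measurableSet_generateFrom ⟨_, rfl⟩

lemma Measure.ext_of_cyl [Countable V] {μ ν : Measure (ℕ → V)} [IsFiniteMeasure μ]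
    (h : ∀ l, μ (cyl l) = ν (cyl l)) : μ = ν :=
  ext_of_generate_finite _ generateFrom_cyl.symm isPiSystem_cyl
    (by rintro _ ⟨l, rfl⟩; exact h l) (by simpa [cyl_nil] using h [])

end Measurability

section Filtration

variable {V : Type} [MeasurableSpace V]

lemma measurable_dropFirst : Measurable (dropFirst : (ℕ → V) → ℕ → V) :=
  measurable_pi_iff.2 fun n => measurable_pi_apply (n + 1)

lemma measurable_apply_hist {j n : ℕ} (hj : j ≤ n) : Measurable[hist V n] (fun ω : ℕ → V => ω j) :=
  fun _ hs => ⟨_, measurable_pi_apply (⟨j, Nat.lt_succ_of_le hj⟩ : Fin (n + 1)) hs, rfl⟩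

def histFiltration : Filtration ℕ (MeasurableSpace.pi : MeasurableSpace (ℕ → V)) where
  seq := hist V
  mono' n m hnm := by
    let := hist V m
    exact (measurable_pi_iff.2 fun i =>
      measurable_apply_hist (Nat.le_of_lt_succ i.isLt |>.trans hnm)).comap_le
  le' _ := (measurable_pi_iff.2 fun _ => measurable_pi_apply _).comap_le

lemma exists_eq_biUnion_cyl_of_measurableSet_hist [Finite V] {n : ℕ} {s : Set (ℕ → V)}
    (hs : MeasurableSet[hist V n] s) :
    ∃ t : Finset (Fin (n + 1) → V), s = ⋃ b ∈ t, cyl (List.ofFn b) := by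
  obtain ⟨t, -, rfl⟩ := hs
  refine ⟨(Set.toFinite t).toFinset, ?_⟩
  ext ω
  simp only [Set.mem_preimage, Set.mem_iUnion, mem_cyl_ofFn, Set.Finite.mem_toFinset,
    exists_prop, exists_eq_right']

lemma isStoppingTime_histFiltration {N : (ℕ → V) → ℕ∞}
    (hN : ∀ n : ℕ, MeasurableSet[hist V n] {ω | N ω ≤ (n : ℕ∞)}) :
    IsStoppingTime histFiltration N :=
  hN

end Filtration

section Induced

variable {V : Type} [MeasurableSpace V] [DiscreteMeasurableSpace V]

lemma measure_cyl_cons_of_ne {ρ : Measure (ℕ → V)} [IsProbabilityMeasure ρ] {v z : V}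
    (hρ : ρ {ω | ω 0 = v} = 1) (hz : z ≠ v) (l : List V) : ρ (cyl (z :: l)) = 0 := by
  refine measure_mono_null (fun ω hω (hω' : ω 0 = v) => hz ?_)
    ((prob_compl_eq_zero_iff (measurableSet_apply_eq 0 v)).2 hρ)
  rw [← (mem_cyl_cons.1 hω).1, hω']

lemma measure_cyl_append_of_cond_eq_one {ρ : Measure (ℕ → V)} [IsFiniteMeasure ρ] {h : List V}
    {c : V} (hpos : ρ (cyl h) ≠ 0) (hc : ρ[{ω | ω h.length = c} | cyl h] = 1) (x : V) :
    ρ (cyl (h ++ [x])) = if x = c then ρ (cyl h) else 0 := by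
  rw [cyl_append, ← cond_mul_eq_inter (measurableSet_cyl h)]
  split_ifs with hx
  · rw [hx, hc, one_mul]
  · have := cond_isProbabilityMeasure hpos
    have hnull : ρ[{ω | ω h.length = c}ᶜ | cyl h] = 0 :=
      (prob_compl_eq_zero_iff (measurableSet_apply_eq _ _)).2 hc
    have hsub : {ω : ℕ → V | ω h.length = x} ⊆ {ω | ω h.length = c}ᶜ :=
      fun ω hω hω' => hx (hω.symm.trans hω')
    rw [measure_mono_null hsub hnull, zero_mul]

variable [Fintype V] {G : Game V} {σ τ : List V → V} {v u : V} {μ : Measure (ℕ → V)}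
  {h : List V}

namespace Game.IsInduced

lemma ae_apply_zero_eq (hμ : G.IsInduced σ τ v μ) : ∀ᵐ ω ∂μ, ω 0 = v := by
  have := hμ.1
  exact ae_iff.2 ((prob_compl_eq_zero_iff (measurableSet_apply_eq 0 v)).2 hμ.2.1)

lemma measure_cyl_singleton (hμ : G.IsInduced σ τ v μ) (x : V) :
    μ (cyl [x]) = if x = v then 1 else 0 := by
  have := hμ.1
  split_ifs with hx
  · rw [hx, cyl_singleton, hμ.2.1]
  · exact measure_cyl_cons_of_ne hμ.2.1 hx []

lemma measure_cyl_append_of_mem_VMax (hμ : G.IsInduced σ τ v μ) (hu : h.getLast? = some u)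
    (hpos : μ (cyl h) ≠ 0) (huM : u ∈ G.VMax) (x : V) :
    μ (cyl (h ++ [x])) = if x = σ h then μ (cyl h) else 0 :=
  have := hμ.1
  measure_cyl_append_of_cond_eq_one hpos ((hμ.2.2 h u hu hpos).1 huM) x

lemma measure_cyl_append_of_mem_Vmin (hμ : G.IsInduced σ τ v μ) (hu : h.getLast? = some u)
    (hpos : μ (cyl h) ≠ 0) (hum : u ∈ G.Vmin) (x : V) :
    μ (cyl (h ++ [x])) = if x = τ h then μ (cyl h) else 0 :=
  have := hμ.1
  measure_cyl_append_of_cond_eq_one hpos ((hμ.2.2 h u hu hpos).2.1 hum) x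

lemma measure_cyl_append_of_mem_VR (hμ : G.IsInduced σ τ v μ) (hu : h.getLast? = some u)
    (hpos : μ (cyl h) ≠ 0) (huR : u ∈ G.VR) (x : V) :
    μ (cyl (h ++ [x])) = μ (cyl h) * ENNReal.ofReal (G.p u x) := by
  have := hμ.1
  rw [cyl_append, ← cond_mul_eq_inter (measurableSet_cyl h), (hμ.2.2 h u hu hpos).2.2 huR x,
    mul_comm]

lemma exists_edge_measure_cyl_append_eq_ite (hμ : G.IsInduced σ τ v μ)
    (hσ : G.IsMaxStrategy σ) (hτ : G.IsMinStrategy τ) (hh : G.FinitePlay h)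
    (hu : h.getLast? = some u) (hpos : μ (cyl h) ≠ 0) (hplayer : u ∈ G.VMax ∨ u ∈ G.Vmin) :
    ∃ c, G.E u c ∧ ∀ x, μ (cyl (h ++ [x])) = if x = c then μ (cyl h) else 0 := by
  rcases hplayer with huM | hum
  · exact ⟨σ h, hσ h hh u hu huM, hμ.measure_cyl_append_of_mem_VMax hu hpos huM⟩
  · exact ⟨τ h, hτ h hh u hu hum, hμ.measure_cyl_append_of_mem_Vmin hu hpos hum⟩

lemma edge_of_measure_cyl_append_ne_zero (hμ : G.IsInduced σ τ v μ)
    (hσ : G.IsMaxStrategy σ) (hτ : G.IsMinStrategy τ) (hh : G.FinitePlay h)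
    (hu : h.getLast? = some u) {x : V} (hx : μ (cyl (h ++ [x])) ≠ 0) : G.E u x := by
  have hpos : μ (cyl h) ≠ 0 := fun h0 => hx (measure_mono_null (cyl_append_subset h x) h0)
  rcases G.cover u with huM | hum | huR
  case inr.inr =>
    rw [hμ.measure_cyl_append_of_mem_VR hu hpos huR, mul_ne_zero_iff, ENNReal.ofReal_ne_zero_iff]
      at hx
    exact (G.p_pos_iff u huR x).1 hx.2
  all_goals
    obtain ⟨c, hc, hcx⟩ :=
      hμ.exists_edge_measure_cyl_append_eq_ite hσ hτ hh hu hpos (by tauto)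
    rw [hcx] at hx
    split_ifs at hx with hxc
    exacts [hxc ▸ hc, absurd rfl hx]

lemma finitePlay_of_measure_cyl_ne_zero (hμ : G.IsInduced σ τ v μ) (hσ : G.IsMaxStrategy σ)
    (hτ : G.IsMinStrategy τ) (hne : h ≠ []) (hpos : μ (cyl h) ≠ 0) :
    G.FinitePlay h ∧ h.head? = some v := by
  induction h using List.reverseRecOn with
  | nil => exact absurd rfl hne
  | append_singleton l x ih =>
    rcases eq_or_ne l [] with rfl | hl
    · rw [List.nil_append, hμ.measure_cyl_singleton] at hpos
      obtain rfl : x = v := by by_contra hx; simp [hx] at hpos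
      exact ⟨⟨hne, List.isChain_singleton x⟩, rfl⟩
    · have hposl : μ (cyl l) ≠ 0 := fun h0 => hpos (measure_mono_null (cyl_append_subset l x) h0)
      obtain ⟨⟨-, hchain⟩, hhead⟩ := ih hl hposl
      have hlast := List.getLast?_eq_some_getLast hl
      have hE := hμ.edge_of_measure_cyl_append_ne_zero hσ hτ ⟨hl, hchain⟩ hlast hpos
      refine ⟨⟨hne, hchain.append (List.isChain_singleton x) ?_⟩,
        (List.head?_append_of_ne_nil l hl).trans hhead⟩
      simp [hlast, hE]

lemma eq_of_agree {σ' τ' : List V → V} {μ' : Measure (ℕ → V)} (hμ : G.IsInduced σ τ v μ)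
    (hμ' : G.IsInduced σ' τ' v μ') (hσ' : G.IsMaxStrategy σ') (hτ' : G.IsMinStrategy τ')
    (hagree : ∀ h u, G.FinitePlay h → h.head? = some v → h.getLast? = some u →
      (u ∈ G.VMax → σ h = σ' h) ∧ (u ∈ G.Vmin → τ h = τ' h)) : μ = μ' := by
  have := hμ.1
  have := hμ'.1
  refine Measure.ext_of_cyl fun l => ?_
  induction l using List.reverseRecOn with
  | nil => simp [cyl_nil]
  | append_singleton l x ih =>
    rcases eq_or_ne l [] with rfl | hl
    · simp only [List.nil_append, hμ.measure_cyl_singleton, hμ'.measure_cyl_singleton]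
    by_cases hpos' : μ' (cyl l) = 0
    · rw [measure_mono_null (cyl_append_subset l x) hpos',
        measure_mono_null (cyl_append_subset l x) (ih ▸ hpos')]
    have hpos : μ (cyl l) ≠ 0 := ih ▸ hpos'
    obtain ⟨hplay, hhead⟩ := hμ'.finitePlay_of_measure_cyl_ne_zero hσ' hτ' hl hpos'
    have hlast := List.getLast?_eq_some_getLast hl
    obtain ⟨hagM, hagm⟩ := hagree l _ hplay hhead hlast
    rcases G.cover (l.getLast hl) with huM | hum | huR
    · rw [hμ.measure_cyl_append_of_mem_VMax hlast hpos huM,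
        hμ'.measure_cyl_append_of_mem_VMax hlast hpos' huM, hagM huM, ih]
    · rw [hμ.measure_cyl_append_of_mem_Vmin hlast hpos hum,
        hμ'.measure_cyl_append_of_mem_Vmin hlast hpos' hum, hagm hum, ih]
    · rw [hμ.measure_cyl_append_of_mem_VR hlast hpos huR,
        hμ'.measure_cyl_append_of_mem_VR hlast hpos' huR, ih]

lemma map_dropFirst_cond (hμ : G.IsInduced σ τ u μ) {x : V} (hpos : μ (cyl [u, x]) ≠ 0) :
    G.IsInduced (fun l => σ (u :: l)) (fun l => τ (u :: l)) x
      ((μ[|cyl [u, x]]).map dropFirst) := by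
  have := hμ.1
  have := cond_isProbabilityMeasure hpos
  have hmap : ∀ S, MeasurableSet S →
      (μ[|cyl [u, x]]).map dropFirst S = μ[dropFirst ⁻¹' S | cyl [u, x]] :=
    fun S hS => Measure.map_apply measurable_dropFirst hS
  have hstart : (μ[|cyl [u, x]]).map dropFirst {ω | ω 0 = x} = 1 := by
    have hsub : cyl [u, x] ⊆ dropFirst ⁻¹' {ω | ω 0 = x} := fun ω hω =>
      (mem_cyl_cons.1 (mem_cyl_cons.1 hω).2).1
    rw [hmap _ (measurableSet_apply_eq 0 x), ← cond_inter_self (measurableSet_cyl _),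
      Set.inter_eq_left.2 hsub, cond_apply_self hpos (measure_ne_top _ _)]
  have := Measure.isProbabilityMeasure_map (μ := μ[|cyl [u, x]]) measurable_dropFirst.aemeasurable
  refine ⟨inferInstance, hstart, fun l y hy hl => ?_⟩
  obtain ⟨z, rest, rfl⟩ := List.exists_cons_of_ne_nil (l := l) (by rintro rfl; simp at hy)
  obtain rfl : z = x := by_contra fun hz => hl (measure_cyl_cons_of_ne hstart hz rest)
  have hcyl := cyl_pair_inter_preimage_dropFirst u z rest
  have hpos' : μ (cyl (u :: z :: rest)) ≠ 0 := by
    rw [hmap _ (measurableSet_cyl _)] at hl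
    exact hcyl ▸ (inter_pos_of_cond_ne_zero (measurableSet_cyl _) hl).ne'
  have hcond : ∀ w, ((μ[|cyl [u, z]]).map dropFirst)[{ω | ω (z :: rest).length = w} |
      cyl (z :: rest)] = μ[{ω | ω (u :: z :: rest).length = w} | cyl (u :: z :: rest)] := by
    intro w
    rw [cond_map_apply measurable_dropFirst (measurableSet_cyl _) (measurableSet_apply_eq _ _),
      cond_cond_eq_cond_inter (measurableSet_cyl _) (measurable_dropFirst (measurableSet_cyl _)),
      hcyl]
    rfl
  obtain ⟨hM, hm, hR⟩ := hμ.2.2 (u :: z :: rest) y (by simpa using hy) hpos'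
  exact ⟨fun h => (hcond _).trans (hM h), fun h => (hcond _).trans (hm h),
    fun h w => (hcond w).trans (hR h w)⟩

end Game.IsInduced

end Induced

section Strategies

variable {V : Type} [Fintype V] [Nonempty V] (G : Game V)

noncomputable def Game.defaultStrat : List V → V := fun h =>
  h.getLast?.elim (Classical.arbitrary V) fun v => (G.succ_exists v).choose

lemma Game.edge_defaultStrat {h : List V} {v : V} (hv : h.getLast? = some v) :
    G.E v (G.defaultStrat h) := by
  simpa [Game.defaultStrat, hv] using (G.succ_exists v).choose_spec

instance : Nonempty {σ // G.IsMaxStrategy σ} :=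
  ⟨⟨G.defaultStrat, fun _ _ _ hv _ => G.edge_defaultStrat hv⟩⟩

instance : Nonempty {τ // G.IsMinStrategy τ} :=
  ⟨⟨G.defaultStrat, fun _ _ _ hv _ => G.edge_defaultStrat hv⟩⟩

noncomputable def Game.glueStrat (σx : V → List V → V) : List V → V
  | _ :: x :: rest => σx x (x :: rest)
  | h => G.defaultStrat h

/-- The fallback only makes this a strategy on every finite play; on plays `x :: _` with
`G.E u x` it plays `τ (u :: _)`. -/
noncomputable def Game.continuation (u : V) (τ : List V → V) : List V → V := fun l =>
  if (u :: l).IsChain G.E then τ (u :: l) else G.defaultStrat l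

variable {G}

lemma Game.isMaxStrategy_glueStrat {σx : V → List V → V} (hσx : ∀ x, G.IsMaxStrategy (σx x)) :
    G.IsMaxStrategy (G.glueStrat σx) := by
  rintro h hh y hy hyM
  match h, hh, hy with
  | [_], _, hy => exact G.edge_defaultStrat hy
  | _ :: x :: rest, hh, hy =>
    exact hσx x (x :: rest) ⟨List.cons_ne_nil _ _, hh.2.tail⟩ y (by simpa using hy) hyM

lemma Game.isMinStrategy_continuation {τ : List V → V} (hτ : G.IsMinStrategy τ) (u : V) :
    G.IsMinStrategy (G.continuation u τ) := by
  intro h hh y hy hym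
  unfold Game.continuation
  split_ifs with hchain
  · obtain ⟨z, rest, rfl⟩ := List.exists_cons_of_ne_nil hh.1
    exact hτ _ ⟨List.cons_ne_nil _ _, hchain⟩ y (by simpa using hy) hym
  · exact G.edge_defaultStrat hy

end Strategies

section Values

variable {V : Type} [Fintype V] [MeasurableSpace V] {G : Game V} {W : Set (ℕ → V)}
  {P : StratFam V}

lemma Game.val_nonneg (v : V) : 0 ≤ G.val W P v :=
  Real.iSup_nonneg fun _ => Real.iInf_nonneg fun _ => ENNReal.toReal_nonneg

lemma bddBelow_range_toReal (σ : List V → V) (v : V) :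
    BddBelow (Set.range fun τ : {τ // G.IsMinStrategy τ} => (P σ τ.1 v W).toReal) :=
  ⟨0, by rintro _ ⟨τ, rfl⟩; exact ENNReal.toReal_nonneg⟩

lemma Game.iInf_toReal_le_one [Nonempty V] (hP : G.IsInducedFam P) (σ : List V → V) (v : V) :
    ⨅ τ : {τ // G.IsMinStrategy τ}, (P σ τ.1 v W).toReal ≤ 1 :=
  ciInf_le_of_le (bddBelow_range_toReal σ v) (Classical.arbitrary _) <| by
    have := (hP σ (Classical.arbitrary {τ // G.IsMinStrategy τ}).1 v).1
    exact measureReal_le_one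

lemma Game.val_le_one [Nonempty V] (hP : G.IsInducedFam P) (v : V) : G.val W P v ≤ 1 :=
  Real.iSup_le (fun σ => G.iInf_toReal_le_one hP σ.1 v) zero_le_one

lemma Game.bddAbove_range_iInf_toReal [Nonempty V] (hP : G.IsInducedFam P) (v : V) :
    BddAbove (Set.range fun σ : {σ // G.IsMaxStrategy σ} =>
      ⨅ τ : {τ // G.IsMinStrategy τ}, (P σ.1 τ.1 v W).toReal) :=
  ⟨1, by rintro _ ⟨σ, rfl⟩; exact G.iInf_toReal_le_one hP σ.1 v⟩

end Values

section RandomVertex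

variable {V : Type} [Fintype V] [MeasurableSpace V] [DiscreteMeasurableSpace V]
  {G : Game V} {W : Set (ℕ → V)} {P : StratFam V}

lemma Game.measure_inter_cyl_pair [Nonempty V] (hW : MeasurableSet W) (hTail : IsTail W)
    (hP : G.IsInducedFam P) {σx : V → List V → V} (hσx : ∀ x, G.IsMaxStrategy (σx x))
    {τ : List V → V} (hτ : G.IsMinStrategy τ) {u x : V} (hE : G.E u x)
    (hpos : P (G.glueStrat σx) τ u (cyl [u, x]) ≠ 0) :
    P (G.glueStrat σx) τ u (W ∩ cyl [u, x]) =
      P (G.glueStrat σx) τ u (cyl [u, x]) * P (σx x) (G.continuation u τ) x W := by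
  have := (hP (G.glueStrat σx) τ u).1
  -- After the move `u → x`, the shifted play follows `σx x` against `continuation u τ` from `x`;
  -- the shift does not affect `W` since `W` is tail.
  have hν := ((hP _ τ u).map_dropFirst_cond hpos).eq_of_agree (hP _ _ x) (hσx x)
    (G.isMinStrategy_continuation hτ u) fun h y hh hhead _ => by
      obtain ⟨z, rest, rfl⟩ := List.exists_cons_of_ne_nil hh.1
      obtain rfl : z = x := by simpa using hhead
      have hchain : (u :: z :: rest).IsChain G.E := List.isChain_cons_cons.2 ⟨hE, hh.2⟩
      exact ⟨fun _ => rfl, fun _ => by simp [Game.continuation, hchain]⟩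
  rw [← hν, Measure.map_apply measurable_dropFirst hW, hTail.preimage_dropFirst, mul_comm,
    cond_mul_eq_inter (measurableSet_cyl _), Set.inter_comm]

lemma Game.sum_p_mul_le_measureReal_glueStrat [Nonempty V] (hW : MeasurableSet W) (hTail : IsTail W)
    (hP : G.IsInducedFam P) {u : V} (hu : u ∈ G.VR) {ε : ℝ} {σx : V → List V → V}
    (hσx : ∀ x, G.IsMaxStrategy (σx x))
    (hσxε : ∀ x, G.val W P x - ε ≤ ⨅ τ : {τ // G.IsMinStrategy τ}, (P (σx x) τ.1 x W).toReal)
    {τ : List V → V} (hτ : G.IsMinStrategy τ) :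
    ∑ x, G.p u x * (G.val W P x - ε) ≤ (P (G.glueStrat σx) τ u).real W := by
  set μ := P (G.glueStrat σx) τ u
  have hμ := hP (G.glueStrat σx) τ u
  have := hμ.1
  have hpair : ∀ x, μ (cyl [u, x]) = ENNReal.ofReal (G.p u x) := fun x => by
    simpa [hμ.measure_cyl_singleton] using
      hμ.measure_cyl_append_of_mem_VR (h := [u]) rfl (by simp [hμ.measure_cyl_singleton]) hu x
  have hterm : ∀ x, G.p u x * (G.val W P x - ε) ≤ μ.real (W ∩ cyl [u, x]) := fun x => by
    rcases (G.p_nonneg u hu x).eq_or_lt with hp | hp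
    · rw [← hp, zero_mul]
      exact measureReal_nonneg
    have hpos : μ (cyl [u, x]) ≠ 0 := by rwa [hpair, ENNReal.ofReal_ne_zero_iff]
    rw [measureReal_def, G.measure_inter_cyl_pair hW hTail hP hσx hτ ((G.p_pos_iff u hu x).1 hp)
      hpos, hpair, ENNReal.toReal_mul, ENNReal.toReal_ofReal hp.le]
    exact mul_le_mul_of_nonneg_left ((hσxε x).trans
      (ciInf_le (bddBelow_range_toReal _ x) ⟨_, G.isMinStrategy_continuation hτ u⟩)) hp.le
  have hdisj : Pairwise (Function.onFun Disjoint fun x => W ∩ cyl [u, x]) := fun x y hxy =>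
    Set.disjoint_left.2 fun ω hx hy => hxy <| by
      have hωx := hx.2 ⟨1, by simp⟩
      have hωy := hy.2 ⟨1, by simp⟩
      simp only [List.get_eq_getElem] at hωx hωy
      simpa [hωx] using hωy
  calc ∑ x, G.p u x * (G.val W P x - ε) ≤ ∑ x, μ.real (W ∩ cyl [u, x]) :=
        Finset.sum_le_sum fun x _ => hterm x
    _ = μ.real (⋃ x, W ∩ cyl [u, x]) :=
        (measureReal_iUnion_fintype hdisj fun _ => hW.inter (measurableSet_cyl _)).symm
    _ ≤ μ.real W := measureReal_mono (Set.iUnion_subset fun _ => Set.inter_subset_left)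

theorem Game.sum_p_mul_val_le (hW : MeasurableSet W) (hTail : IsTail W) (hP : G.IsInducedFam P)
    {u : V} (hu : u ∈ G.VR) : ∑ x, G.p u x * G.val W P x ≤ G.val W P u := by
  have : Nonempty V := ⟨u⟩
  refine le_of_forall_pos_le_add fun ε hε => ?_
  choose σx hσx using fun x => exists_lt_of_lt_ciSup (sub_lt_self (G.val W P x) hε)
  have hbound (τ : {τ // G.IsMinStrategy τ}) :=
    G.sum_p_mul_le_measureReal_glueStrat hW hTail hP hu (fun x => (σx x).2)
      (fun x => (hσx x).le) τ.2
  calc ∑ x, G.p u x * G.val W P x = ∑ x, G.p u x * (G.val W P x - ε) + ε := by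
        simp [mul_sub, Finset.sum_sub_distrib, ← Finset.sum_mul, G.p_sum u hu]
    _ ≤ G.val W P u + ε := by
        gcongr
        exact (le_ciInf hbound).trans (le_ciSup (G.bddAbove_range_iInf_toReal hP u)
          ⟨_, G.isMaxStrategy_glueStrat fun x => (σx x).2⟩)

end RandomVertex

lemma setIntegral_comp_apply {V : Type} [Fintype V] [MeasurableSpace V]
    [DiscreteMeasurableSpace V] {μ : Measure (ℕ → V)} [IsFiniteMeasure μ] (s : Set (ℕ → V))
    (k : ℕ) (φ : V → ℝ) : ∫ ω in s, φ (ω k) ∂μ = ∑ x, μ.real (s ∩ {ω | ω k = x}) * φ x := by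
  rw [← integral_map (measurable_pi_apply k).aemeasurable
    Measurable.of_discrete.aestronglyMeasurable, integral_fintype Integrable.of_finite]
  refine Finset.sum_congr rfl fun x _ => ?_
  rw [smul_eq_mul, map_measureReal_apply (measurable_pi_apply k) (measurableSet_singleton x),
    measureReal_restrict_apply (measurable_pi_apply k (measurableSet_singleton x)), Set.inter_comm]
  rfl

section OneStep

variable {V : Type} [Fintype V] [MeasurableSpace V] [DiscreteMeasurableSpace V] {G : Game V}
  {W : Set (ℕ → V)} {P : StratFam V} {σ τ : List V → V} {v : V} {μ : Measure (ℕ → V)}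

namespace Game.IsInduced

lemma sum_measureReal_cyl_append_mul_val_le (hμ : G.IsInduced σ τ v μ)
    (hσ : G.IsMaxStrategy σ) (hτ : G.IsMinStrategy τ) (hW : MeasurableSet W) (hTail : IsTail W)
    (hP : G.IsInducedFam P) (hCons : G.Consistent W P) {h : List V} {u : V}
    (hu : h.getLast? = some u) :
    ∑ x, μ.real (cyl (h ++ [x])) * G.val W P x ≤ μ.real (cyl h) * G.val W P u := by
  by_cases hpos : μ (cyl h) = 0
  · simp [measureReal_def, hpos, measure_mono_null (cyl_append_subset h _) hpos]
  have hne : h ≠ [] := by rintro rfl; simp at hu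
  obtain ⟨hplay, -⟩ := hμ.finitePlay_of_measure_cyl_ne_zero hσ hτ hne hpos
  rcases G.cover u with huM | hum | huR
  case inr.inr =>
    have hstep (x : V) : μ.real (cyl (h ++ [x])) = μ.real (cyl h) * G.p u x := by
      rw [measureReal_def, hμ.measure_cyl_append_of_mem_VR hu hpos huR, ENNReal.toReal_mul,
        ENNReal.toReal_ofReal (G.p_nonneg u huR x), measureReal_def]
    simp_rw [hstep, mul_assoc, ← Finset.mul_sum]
    exact mul_le_mul_of_nonneg_left (G.sum_p_mul_val_le hW hTail hP huR) measureReal_nonneg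
  all_goals
    obtain ⟨c, hc, hcx⟩ :=
      hμ.exists_edge_measure_cyl_append_eq_ite hσ hτ hplay hu hpos (by tauto)
    rw [hCons u c hc (by tauto)]
    simp only [measureReal_def, hcx, apply_ite ENNReal.toReal, ENNReal.toReal_zero, ite_mul,
      zero_mul, Finset.sum_ite_eq', Finset.mem_univ, if_true, le_refl]

lemma setIntegral_cyl_val_succ_le (hμ : G.IsInduced σ τ v μ)
    (hσ : G.IsMaxStrategy σ) (hτ : G.IsMinStrategy τ) (hW : MeasurableSet W) (hTail : IsTail W)
    (hP : G.IsInducedFam P) (hCons : G.Consistent W P) {n : ℕ} (b : Fin (n + 1) → V) :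
    ∫ ω in cyl (List.ofFn b), G.val W P (ω (n + 1)) ∂μ ≤
      ∫ ω in cyl (List.ofFn b), G.val W P (ω n) ∂μ := by
  have := hμ.1
  have hlen : (List.ofFn b).length = n + 1 := List.length_ofFn
  have hlast : (List.ofFn b).getLast? = some (b (Fin.last n)) := by
    rw [List.getLast?_eq_some_getLast (by simp), List.getLast_ofFn_succ]
  rw [setIntegral_comp_apply,
    setIntegral_congr_fun (measurableSet_cyl _) (g := fun _ => G.val W P (b (Fin.last n)))
      fun ω hω => by simpa using congrArg (G.val W P) (congrFun (mem_cyl_ofFn.1 hω) (Fin.last n)),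
    setIntegral_const, smul_eq_mul]
  simpa only [cyl_append, hlen] using
    hμ.sum_measureReal_cyl_append_mul_val_le hσ hτ hW hTail hP hCons hlast

end Game.IsInduced

theorem Game.supermartingale_val (hW : MeasurableSet W) (hTail : IsTail W)
    (hP : G.IsInducedFam P) (hCons : G.Consistent W P) (hσ : G.IsMaxStrategy σ)
    (hτ : G.IsMinStrategy τ) (v : V) :
    Supermartingale (fun n ω => G.val W P (ω n)) histFiltration (P σ τ v) := by
  have : Nonempty V := ⟨v⟩
  have hμ := hP σ τ v
  have := hμ.1
  have hmeas (n : ℕ) : Measurable[hist V n] fun ω : ℕ → V => G.val W P (ω n) :=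
    (measurable_of_finite (G.val W P)).comp (measurable_apply_hist le_rfl)
  have hint (n : ℕ) : Integrable (fun ω : ℕ → V => G.val W P (ω n)) (P σ τ v) :=
    .of_bound ((hmeas n).mono (histFiltration.le n) le_rfl).aestronglyMeasurable 1
      (ae_of_all _ fun ω => by
        rw [Real.norm_of_nonneg (G.val_nonneg _)]
        exact G.val_le_one hP _)
  refine supermartingale_of_setIntegral_succ_le (fun n => (hmeas n).stronglyMeasurable) hint
    fun n s hs => ?_
  obtain ⟨t, rfl⟩ := exists_eq_biUnion_cyl_of_measurableSet_hist hs
  have hdisj : Set.PairwiseDisjoint (t : Set (Fin (n + 1) → V)) fun b => cyl (List.ofFn b) :=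
    fun b _ b' _ hbb' => Set.disjoint_left.2 fun ω hb hb' =>
      hbb' ((mem_cyl_ofFn.1 hb).symm.trans (mem_cyl_ofFn.1 hb'))
  rw [integral_biUnion_finset t (fun b _ => measurableSet_cyl _) hdisj
      fun b _ => (hint _).integrableOn,
    integral_biUnion_finset t (fun b _ => measurableSet_cyl _) hdisj
      fun b _ => (hint _).integrableOn]
  exact Finset.sum_le_sum fun b _ => hμ.setIntegral_cyl_val_succ_le hσ hτ hW hTail hP hCons b

end OneStep

variable {V : Type} [Fintype V] [MeasurableSpace V] [DiscreteMeasurableSpace V]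

/-- optional stopping bound: in a consistent game, for any stopping time `N`,
`E[val(V_N)·1_{N<∞}] ≤ val(v₀)`. -/
theorem stopped_val_le
    (G : Game V) (W : Set (ℕ → V)) (hW : MeasurableSet W) (hTail : IsTail W)
    (P : StratFam V) (hP : G.IsInducedFam P) (hCons : G.Consistent W P)
    (σ τ : List V → V) (hσ : G.IsMaxStrategy σ) (hτ : G.IsMinStrategy τ) (v₀ : V)
    (N : (ℕ → V) → ℕ∞) (hN : ∀ n : ℕ, MeasurableSet[hist V n] {ω | N ω ≤ (n : ℕ∞)}) :
    ∫ ω, (if N ω < ⊤ then G.val W P (ω ((N ω).toNat)) else 0) ∂(P σ τ v₀)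
      ≤ G.val W P v₀ := by
  have hμ := hP σ τ v₀
  have := hμ.1
  set Y : ℕ → (ℕ → V) → ℝ := fun n ω => G.val W P (ω n)
  -- `stoppedValue Y N` is junk where `N = ⊤`, hence the indicator.
  have hintegrand (ω : ℕ → V) : (if N ω < ⊤ then Y (N ω).toNat ω else 0) =
      {ω | N ω ≠ ⊤}.indicator (stoppedValue Y N) ω := by
    rcases eq_or_ne (N ω) ⊤ with h | h
    · simp [h]
    · lift N ω to ℕ using h with k hk
      simp [Set.indicator, stoppedValue, ← hk]
  calc ∫ ω, (if N ω < ⊤ then Y (N ω).toNat ω else 0) ∂(P σ τ v₀)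
      = ∫ ω, {ω | N ω ≠ ⊤}.indicator (stoppedValue Y N) ω ∂(P σ τ v₀) :=
        integral_congr_ae (.of_forall hintegrand)
    _ ≤ ∫ ω, Y 0 ω ∂(P σ τ v₀) :=
        (G.supermartingale_val hW hTail hP hCons hσ hτ v₀).integral_indicator_stoppedValue_le
          (fun _ _ => G.val_nonneg _) (isStoppingTime_histFiltration hN)
    _ = ∫ _, G.val W P v₀ ∂(P σ τ v₀) :=
        integral_congr_ae (hμ.ae_apply_zero_eq.mono fun ω hω => by simp [Y, hω])
    _ = G.val W P v₀ := by simp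

end StochasticGames
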